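/- arXiv:1708.01212 — 10 statements merged into one kernel-verified Lean document; each statement's English description precedes it below -/
import Mathlib

section
/- The function γ(ξ) = Real.log (g ξ) is convex on Ω, i.e. ConvexOn ℝ Ω (fun ξ => Real.log (g ξ)). (Corollary: the log-exp transform γ(ξ) = log C(e^ξ) of a multivariate generating function is convex on its domain of convergence.) -/
/-!
Hölder's inequality with exponents `1/a`, `1/b` applied to the families `(c p e^{p·ξ})^a` and
`(c p e^{p·η})^b` gives `g(aξ + bη) ≤ g(ξ)^a g(η)^b` whenever `a + b = 1`, together with the
summability of the left-hand side; taking logarithms is convexity. The same argument works for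
any family of linear forms in place of `ξ ↦ p·ξ`.
-/

open Real

theorem summable_and_tsum_rpow_mul_rpow_le {ι : Type*} {u v : ι → ℝ} (hu : ∀ i, 0 ≤ u i)
    (hv : ∀ i, 0 ≤ v i) (hu_sum : Summable u) (hv_sum : Summable v) {a b : ℝ} (ha : 0 < a)
    (hb : 0 < b) (hab : a + b = 1) :
    (Summable fun i => u i ^ a * v i ^ b) ∧
      ∑' i, u i ^ a * v i ^ b ≤ (∑' i, u i) ^ a * (∑' i, v i) ^ b := by
  have hpq : HolderConjugate (1 / a) (1 / b) := by
    rw [holderConjugate_iff, one_div, one_div, inv_inv, inv_inv]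
    exact ⟨one_lt_inv_iff₀.2 ⟨ha, by linarith⟩, hab⟩
  have rpow_rpow_inv {w : ι → ℝ} (hw : ∀ i, 0 ≤ w i) {t : ℝ} (ht : t ≠ 0) (i : ι) :
      (w i ^ t) ^ (1 / t) = w i := by
    rw [← rpow_mul (hw i), mul_one_div_cancel ht, rpow_one]
  have := summable_and_inner_le_Lp_mul_Lq_tsum_of_nonneg hpq
    (fun i => rpow_nonneg (hu i) a) (fun i => rpow_nonneg (hv i) b)
    (by simpa only [rpow_rpow_inv hu ha.ne'] using hu_sum)
    (by simpa only [rpow_rpow_inv hv hb.ne'] using hv_sum)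
  simpa only [rpow_rpow_inv hu ha.ne', rpow_rpow_inv hv hb.ne', one_div_one_div] using this

theorem mul_exp_add_eq_rpow_mul_rpow {c : ℝ} (hc : 0 ≤ c) (s t : ℝ) {a b : ℝ} (hab : a + b = 1) :
    c * exp (a * s + b * t) = (c * exp s) ^ a * (c * exp t) ^ b := by
  rw [mul_rpow hc (exp_pos s).le, mul_rpow hc (exp_pos t).le, ← exp_mul, ← exp_mul,
    mul_mul_mul_comm, ← rpow_add' hc (by rw [hab]; exact one_ne_zero), hab, rpow_one, ← exp_add,
    mul_comm s, mul_comm t]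

section LinearForms

variable {ι E : Type*} [AddCommGroup E] [Module ℝ E] {c : ι → ℝ} (hc : ∀ p, 0 ≤ c p)
  (ℓ : ι → E →ₗ[ℝ] ℝ)
include hc

theorem summable_and_tsum_mul_exp_le {x y : E}
    (hx : Summable fun p => c p * exp (ℓ p x)) (hy : Summable fun p => c p * exp (ℓ p y))
    {a b : ℝ} (ha : 0 < a) (hb : 0 < b) (hab : a + b = 1) :
    (Summable fun p => c p * exp (ℓ p (a • x + b • y))) ∧
      ∑' p, c p * exp (ℓ p (a • x + b • y)) ≤
        (∑' p, c p * exp (ℓ p x)) ^ a * (∑' p, c p * exp (ℓ p y)) ^ b := by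
  simp only [map_add, map_smul, smul_eq_mul, mul_exp_add_eq_rpow_mul_rpow (hc _) _ _ hab]
  exact summable_and_tsum_rpow_mul_rpow_le (fun p => mul_nonneg (hc p) (exp_pos _).le)
    (fun p => mul_nonneg (hc p) (exp_pos _).le) hx hy ha hb hab

theorem convex_setOf_summable_mul_exp :
    Convex ℝ {x | Summable fun p => c p * exp (ℓ p x)} :=
  convex_iff_forall_pos.2 fun _ hx _ hy _ _ ha hb hab =>
    (summable_and_tsum_mul_exp_le hc ℓ hx hy ha hb hab).1

theorem convexOn_log_tsum_mul_exp :
    ConvexOn ℝ {x | Summable fun p => c p * exp (ℓ p x)}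
      fun x => log (∑' p, c p * exp (ℓ p x)) := by
  refine convexOn_iff_forall_pos.2 ⟨convex_setOf_summable_mul_exp hc ℓ,
    fun x hx y hy a b ha hb hab => ?_⟩
  obtain rfl | ⟨p₀, hp₀⟩ := eq_or_ne c 0 |>.imp_right Function.ne_iff.1
  · simp -- every sum vanishes and `log 0 = 0`
  have tsum_pos {z : E} (hz : Summable fun p => c p * exp (ℓ p z)) :
      0 < ∑' p, c p * exp (ℓ p z) :=
    hz.tsum_pos (fun p => mul_nonneg (hc p) (exp_pos _).le) p₀
      (mul_pos ((hc p₀).lt_of_ne' hp₀) (exp_pos _))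
  obtain ⟨hxy, hle⟩ := summable_and_tsum_mul_exp_le hc ℓ hx hy ha hb hab
  calc log (∑' p, c p * exp (ℓ p (a • x + b • y)))
      ≤ log ((∑' p, c p * exp (ℓ p x)) ^ a * (∑' p, c p * exp (ℓ p y)) ^ b) :=
        log_le_log (tsum_pos hxy) hle
    _ = a • log (∑' p, c p * exp (ℓ p x)) + b • log (∑' p, c p * exp (ℓ p y)) := by
        rw [log_mul (rpow_pos_of_pos (tsum_pos hx) a).ne' (rpow_pos_of_pos (tsum_pos hy) b).ne',
          log_rpow (tsum_pos hx), log_rpow (tsum_pos hy), smul_eq_mul, smul_eq_mul]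

end LinearForms

theorem log_exp_transform_convexOn_general
    (k : ℕ)
    (c : (Fin k → ℕ) → ℝ)
    (hc : ∀ p, 0 ≤ c p)
    (g : (Fin k → ℝ) → ℝ)
    (hg : ∀ ξ, g ξ = ∑' p : Fin k → ℕ, c p * Real.exp (∑ i, (p i : ℝ) * ξ i))
    (Ω : Set (Fin k → ℝ))
    (hΩ : Ω = {ξ : Fin k → ℝ |
      Summable fun p : Fin k → ℕ => c p * Real.exp (∑ i, (p i : ℝ) * ξ i)}) :
    ConvexOn ℝ Ω (fun ξ => Real.log (g ξ)) := by
  obtain rfl := funext hg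
  subst hΩ
  exact convexOn_log_tsum_mul_exp hc fun p => dotProductBilin ℝ ℝ fun i => (p i : ℝ)

/-- The log-exp transform `γ(ξ) = log C(e^ξ)` of a multivariate generating
function with nonnegative coefficients is convex on its domain of convergence. -/
theorem log_exp_transform_convexOn
    (k : ℕ) (hk : 1 ≤ k)
    (c : (Fin k → ℕ) → ℝ)
    (hc : ∀ p, 0 ≤ c p) (hc0 : c ≠ 0)
    (g : (Fin k → ℝ) → ℝ)
    (hg : ∀ ξ, g ξ = ∑' p : Fin k → ℕ, c p * Real.exp (∑ i, (p i : ℝ) * ξ i))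
    (Ω : Set (Fin k → ℝ))
    (hΩ : Ω = {ξ : Fin k → ℝ |
      Summable fun p : Fin k → ℕ => c p * Real.exp (∑ i, (p i : ℝ) * ξ i)}) :
    ConvexOn ℝ Ω (fun ξ => Real.log (g ξ)) :=
  log_exp_transform_convexOn_general k c hc g hg Ω hΩ
end

section
/- If ξ lies in the interior of Ω, then for every i : Fin k the family p ↦ (p i : ℝ) * c p * Real.exp (∑ j, (p j : ℝ) * ξ j) is summable, and the function t ↦ Real.log (g (ξ + t • Pi.single i 1)) has derivative at t = 0 equal to (∑' p, (p i : ℝ) * c p * Real.exp (∑ j, (p j : ℝ) * ξ j)) / g ξ. In other words, the expected number of atoms of type i under the Boltzmann distribution at z = e^ξ equals the i-th partial derivative of log C(e^ξ). -/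
/-!
Along the line `t ↦ ξ + t • eᵢ` the generating function is an exponential tilt
`t ↦ ∑' p, a p * exp (t * pᵢ)` of the nonnegative weights `a p = c p * exp (p ⬝ ξ)`. Since `ξ` is
interior, the tilt still converges at some `r > 0`, and `x ≤ exp (δ x) / δ` turns this into a
summable bound for the termwise derivatives `pᵢ * a p * exp (t * pᵢ)` uniformly in `t < r / 2`.
Hence the series may be differentiated termwise at `0`, and the chain rule for `log` gives the
claim, the denominator `g ξ` being positive because `c ≠ 0`.
-/

open Real

lemma le_exp_mul_div {δ : ℝ} (hδ : 0 < δ) (x : ℝ) : x ≤ exp (δ * x) / δ := by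
  rw [le_div_iff₀ hδ]
  linarith [add_one_le_exp (δ * x)]

lemma sum_mul_add_smul_single {ι : Type*} [Fintype ι] [DecidableEq ι] (x ξ : ι → ℝ) (i : ι)
    (t : ℝ) : ∑ j, x j * (ξ + t • (Pi.single i 1 : ι → ℝ)) j = ∑ j, x j * ξ j + t * x i := by
  simp [mul_add, Finset.sum_add_distrib, Pi.single_apply, mul_comm]

open Filter Topology in
lemma exists_pos_add_smul_mem_of_mem_nhds {E : Type*} [AddCommGroup E] [Module ℝ E]
    [TopologicalSpace E] [ContinuousAdd E] [ContinuousSMul ℝ E] {s : Set E} {x : E}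
    (hs : s ∈ 𝓝 x) (v : E) : ∃ r : ℝ, 0 < r ∧ x + r • v ∈ s := by
  have hline : Tendsto (fun t : ℝ => x + t • v) (𝓝 0) (𝓝 x) :=
    (by fun_prop : Continuous fun t : ℝ => x + t • v).tendsto' 0 x (by simp)
  obtain ⟨r, hrs, hr⟩ := ((hline.eventually hs).filter_mono nhdsWithin_le_nhds |>.and
    (self_mem_nhdsWithin (s := Set.Ioi (0 : ℝ)))).exists
  exact ⟨r, hr, hrs⟩

section ExponentialTilt

variable {ι : Type*} {a w : ι → ℝ} {r : ℝ}

lemma norm_mul_mul_exp_le (ha : ∀ p, 0 ≤ a p) (hw : ∀ p, 0 ≤ w p) (hr : 0 < r) {t : ℝ}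
    (ht : t ≤ r / 2) (p : ι) :
    ‖w p * (a p * exp (t * w p))‖ ≤ 2 / r * (a p * exp (r * w p)) := by
  have hwexp : w p * exp (t * w p) ≤ 2 / r * exp (r * w p) := calc
    w p * exp (t * w p) ≤ exp (r / 2 * w p) / (r / 2) * exp (r / 2 * w p) := by
      gcongr
      · exact le_exp_mul_div (by positivity) _
      · exact hw p
    _ = 2 / r * exp (r * w p) := by
      rw [div_mul_eq_mul_div, ← exp_add, ← add_mul, add_halves]; ring
  rw [Real.norm_of_nonneg (mul_nonneg (hw p) (mul_nonneg (ha p) (exp_pos _).le))]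
  calc w p * (a p * exp (t * w p)) = a p * (w p * exp (t * w p)) := by ring
    _ ≤ a p * (2 / r * exp (r * w p)) := mul_le_mul_of_nonneg_left hwexp (ha p)
    _ = 2 / r * (a p * exp (r * w p)) := by ring

variable (ha : ∀ p, 0 ≤ a p) (hw : ∀ p, 0 ≤ w p) (hr : 0 < r)
  (hs : Summable fun p => a p * exp (r * w p))
include ha hw hr hs

lemma summable_mul_of_summable_mul_exp : Summable fun p => w p * a p := by
  refine (hs.mul_left (2 / r)).of_norm_bounded fun p => ?_
  simpa using norm_mul_mul_exp_le ha hw hr (t := 0) (by positivity) p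

lemma hasDerivAt_tsum_mul_exp :
    HasDerivAt (fun t => ∑' p, a p * exp (t * w p)) (∑' p, w p * a p) 0 := by
  have h0 : (0 : ℝ) ∈ Set.Iio (r / 2) := by simpa using half_pos hr
  have := hasDerivAt_tsum_of_isPreconnected (hs.mul_left (2 / r)) isOpen_Iio isPreconnected_Iio
    (g := fun p t => a p * exp (t * w p)) (g' := fun p t => w p * (a p * exp (t * w p)))
    (fun p t _ => by simpa [mul_comm, mul_left_comm] using
      ((hasDerivAt_mul_const (w p)).exp.const_mul (a p) : HasDerivAt _ _ t))
    (fun p t ht => norm_mul_mul_exp_le ha hw hr (le_of_lt ht) p) h0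
    (by simpa using hs.of_nonneg_of_le ha fun p =>
      le_mul_of_one_le_right (ha p) (one_le_exp (mul_nonneg hr.le (hw p)))) h0
  simpa using this

end ExponentialTilt

theorem boltzmann_expectation_eq_partial_deriv_general
    (k : ℕ)
    (c : (Fin k → ℕ) → ℝ)
    (hc : ∀ p, 0 ≤ c p) (hc0 : c ≠ 0)
    (g : (Fin k → ℝ) → ℝ)
    (hg : ∀ ξ, g ξ = ∑' p : Fin k → ℕ, c p * Real.exp (∑ i, (p i : ℝ) * ξ i))
    (Ω : Set (Fin k → ℝ))
    (hΩ : Ω = {ξ : Fin k → ℝ |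
      Summable fun p : Fin k → ℕ => c p * Real.exp (∑ i, (p i : ℝ) * ξ i)})
    (ξ : Fin k → ℝ) (hξ : ξ ∈ interior Ω) :
    ∀ i : Fin k,
      Summable (fun p : Fin k → ℕ =>
        (p i : ℝ) * c p * Real.exp (∑ j, (p j : ℝ) * ξ j)) ∧
      HasDerivAt (fun t : ℝ => Real.log (g (ξ + t • (Pi.single i 1 : Fin k → ℝ))))
        ((∑' p : Fin k → ℕ,
            (p i : ℝ) * c p * Real.exp (∑ j, (p j : ℝ) * ξ j)) / g ξ) 0 := by
  intro i
  set a : (Fin k → ℕ) → ℝ := fun p => c p * exp (∑ j, (p j : ℝ) * ξ j)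
  have ha : ∀ p, 0 ≤ a p := fun p => mul_nonneg (hc p) (exp_pos _).le
  have hw : ∀ p : Fin k → ℕ, 0 ≤ (p i : ℝ) := fun p => Nat.cast_nonneg _
  have hline : ∀ (t : ℝ) p, c p * exp (∑ j, (p j : ℝ) * (ξ + t • (Pi.single i 1 : Fin k → ℝ)) j)
      = a p * exp (t * p i) := by
    intro t p
    rw [sum_mul_add_smul_single, exp_add, ← mul_assoc]
  obtain ⟨r, hr, hrΩ⟩ := exists_pos_add_smul_mem_of_mem_nhds (mem_interior_iff_mem_nhds.mp hξ)
    (Pi.single i 1 : Fin k → ℝ)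
  have hs : Summable fun p => a p * exp (r * p i) := by
    rw [hΩ] at hrΩ
    simpa only [Set.mem_ofPred_eq, hline] using hrΩ
  have hgpos : 0 < ∑' p, a p := by
    obtain ⟨p, hp⟩ := Function.ne_iff.mp hc0
    have hsum : Summable a := by simpa [hΩ] using interior_subset hξ
    exact hsum.tsum_pos ha p (mul_pos ((hc p).lt_of_ne' hp) (exp_pos _))
  have hmean : ∑' p, (p i : ℝ) * c p * exp (∑ j, (p j : ℝ) * ξ j) = ∑' p, (p i : ℝ) * a p := by
    simp only [a, mul_assoc]
  refine ⟨by simpa [a, mul_assoc] using summable_mul_of_summable_mul_exp ha hw hr hs, ?_⟩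
  have hgξ : g ξ = ∑' p, a p * exp (0 * p i) := by simp [hg, a]
  rw [hmean, hgξ]
  simpa only [hg, hline] using (hasDerivAt_tsum_mul_exp ha hw hr hs).log (by simpa using hgpos.ne')

/-- Inside the interior of the domain of convergence, the expected number of
atoms of type `i` under the Boltzmann distribution at `z = e^ξ` equals the
`i`-th partial derivative of `log C(e^ξ)`. -/
theorem boltzmann_expectation_eq_partial_deriv
    (k : ℕ) (hk : 1 ≤ k)
    (c : (Fin k → ℕ) → ℝ)
    (hc : ∀ p, 0 ≤ c p) (hc0 : c ≠ 0)
    (g : (Fin k → ℝ) → ℝ)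
    (hg : ∀ ξ, g ξ = ∑' p : Fin k → ℕ, c p * Real.exp (∑ i, (p i : ℝ) * ξ i))
    (Ω : Set (Fin k → ℝ))
    (hΩ : Ω = {ξ : Fin k → ℝ |
      Summable fun p : Fin k → ℕ => c p * Real.exp (∑ i, (p i : ℝ) * ξ i)})
    (ξ : Fin k → ℝ) (hξ : ξ ∈ interior Ω) :
    ∀ i : Fin k,
      Summable (fun p : Fin k → ℕ =>
        (p i : ℝ) * c p * Real.exp (∑ j, (p j : ℝ) * ξ j)) ∧
      HasDerivAt (fun t : ℝ => Real.log (g (ξ + t • (Pi.single i 1 : Fin k → ℝ))))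
        ((∑' p : Fin k → ℕ,
            (p i : ℝ) * c p * Real.exp (∑ j, (p j : ℝ) * ξ j)) / g ξ) 0 :=
  boltzmann_expectation_eq_partial_deriv_general k c hc hc0 g hg Ω hΩ ξ hξ
end

section
/- Let ν : Fin k → ℝ and let ξ* lie in the interior of Ω. Then the expectation conditions ∀ i, ∑' p, (p i : ℝ) * c p * Real.exp (∑ j, (p j : ℝ) * ξ*_j) = ν i * g ξ* hold if and only if ξ* is a global minimizer over Ω of the convex function ξ ↦ Real.log (g ξ) − ∑ i, ν i * ξ i. (Tuning the Boltzmann sampler to expected composition sizes ν is equivalent to the convex minimization problem log C(e^ξ) − ν^⊤ξ → min.) -/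
private lemma exp_neg_le_aux (x : ℝ) (hx : 0 ≤ x) : Real.exp (-x) ≤ 1 - x + x ^ 2 := by
  have h1 : Real.exp (-x) * Real.exp x = 1 := by
    rw [← Real.exp_add]; simp
  have h2 := Real.add_one_le_exp x
  have h3 := (Real.exp_pos (-x)).le
  nlinarith [mul_le_mul_of_nonneg_left h2 h3, pow_nonneg hx 3, sq_nonneg x,
    mul_nonneg h3 hx]

private lemma exp_le_aux (x : ℝ) (hx : 0 ≤ x) :
    Real.exp x ≤ 1 + x + x ^ 2 * Real.exp x := by
  have h1 : Real.exp (-x) * Real.exp x = 1 := by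
    rw [← Real.exp_add]; simp
  have h2 := Real.add_one_le_exp (-x)
  have h3 := (Real.exp_pos x).le
  have h4 : (1 - x) * Real.exp x ≤ 1 := by nlinarith [mul_le_mul_of_nonneg_right h2 h3]
  nlinarith [mul_le_mul_of_nonneg_left h4 hx]

set_option maxHeartbeats 1000000 in
/-- Tuning a multiparametric Boltzmann sampler to expected composition sizes
`ν` is equivalent to the convex minimisation problem
`log C(e^ξ) − ν^⊤ ξ → min` over the domain of convergence. -/
theorem tuning_iff_min_of_convex_program
    (k : ℕ) (hk : 1 ≤ k)
    (c : (Fin k → ℕ) → ℝ)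
    (hc : ∀ p, 0 ≤ c p) (hc0 : c ≠ 0)
    (g : (Fin k → ℝ) → ℝ)
    (hg : ∀ ξ, g ξ = ∑' p : Fin k → ℕ, c p * Real.exp (∑ i, (p i : ℝ) * ξ i))
    (Ω : Set (Fin k → ℝ))
    (hΩ : Ω = {ξ : Fin k → ℝ |
      Summable fun p : Fin k → ℕ => c p * Real.exp (∑ i, (p i : ℝ) * ξ i)})
    (ν : Fin k → ℝ)
    (ξs : Fin k → ℝ) (hξs : ξs ∈ interior Ω) :
    (∀ i : Fin k,
        ∑' p : Fin k → ℕ, (p i : ℝ) * c p * Real.exp (∑ j, (p j : ℝ) * ξs j)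
          = ν i * g ξs)
    ↔ (∀ η ∈ Ω,
        Real.log (g ξs) - ∑ i, ν i * ξs i ≤ Real.log (g η) - ∑ i, ν i * η i) := by
  have hmemΩ : ξs ∈ Ω := interior_subset hξs
  rw [mem_interior_iff_mem_nhds, Metric.mem_nhds_iff] at hξs
  obtain ⟨ε, hε, hball⟩ := hξs
  set A : (Fin k → ℕ) → ℝ := fun p => c p * Real.exp (∑ j, (p j : ℝ) * ξs j) with hAdef
  have hA : Summable A := by rw [hΩ] at hmemΩ; exact hmemΩ
  have hA0 : ∀ p, 0 ≤ A p := fun p => mul_nonneg (hc p) (Real.exp_pos _).le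
  obtain ⟨p₀, hp₀⟩ := Function.ne_iff.mp hc0
  have hp₀' : 0 < c p₀ := lt_of_le_of_ne (hc p₀) (Ne.symm hp₀)
  have hAp₀ : 0 < A p₀ := by
    simp only [hAdef]; exact mul_pos hp₀' (Real.exp_pos _)
  set G : ℝ := ∑' p, A p with hGdef
  have hGpos : 0 < G := Summable.tsum_pos hA hA0 p₀ hAp₀
  have hGg : g ξs = G := by rw [hg]
  -- sum computations for coordinate updates
  have hupd : ∀ (i : Fin k) (t : ℝ) (p : Fin k → ℕ),
      c p * Real.exp (∑ j, (p j : ℝ) * (Function.update ξs i (ξs i + t)) j)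
        = A p * Real.exp (t * (p i : ℝ)) := by
    intro i t p
    have hs : ∑ j, (p j : ℝ) * (Function.update ξs i (ξs i + t)) j
        = (∑ j, (p j : ℝ) * ξs j) + t * (p i : ℝ) := by
      have h : ∀ j ∈ Finset.univ, (p j : ℝ) * (Function.update ξs i (ξs i + t)) j
          = (p j : ℝ) * ξs j + (if j = i then t * (p i : ℝ) else 0) := by
        intro j _
        rcases eq_or_ne j i with h | h
        · subst h; rw [Function.update_self, if_pos rfl]; ring
        · simp [Function.update_of_ne h, h]
      rw [Finset.sum_congr rfl h, Finset.sum_add_distrib]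
      simp
    rw [hs, Real.exp_add]
    simp only [hAdef]; ring
  have hupdν : ∀ (i : Fin k) (t : ℝ),
      ∑ j, ν j * (Function.update ξs i (ξs i + t)) j = (∑ j, ν j * ξs j) + ν i * t := by
    intro i t
    have h : ∀ j ∈ Finset.univ, ν j * (Function.update ξs i (ξs i + t)) j
        = ν j * ξs j + (if j = i then ν i * t else 0) := by
      intro j _
      rcases eq_or_ne j i with h | h
      · subst h; rw [Function.update_self, if_pos rfl]; ring
      · simp [Function.update_of_ne h, h]
    rw [Finset.sum_congr rfl h, Finset.sum_add_distrib]
    simp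
  have hmemupd : ∀ (i : Fin k) (t : ℝ), |t| < ε → Function.update ξs i (ξs i + t) ∈ Ω := by
    intro i t ht
    apply hball
    rw [Metric.mem_ball, dist_pi_lt_iff hε]
    intro j
    rcases eq_or_ne j i with h | h
    · subst h
      rw [Function.update_self, Real.dist_eq]
      simpa using ht
    · simp [Function.update_of_ne h, hε]
  have hshift : ∀ (i : Fin k) (t : ℝ), |t| < ε →
      Summable (fun p => A p * Real.exp (t * (p i : ℝ))) := by
    intro i t ht
    have h1 := hmemupd i t ht
    rw [hΩ] at h1
    exact Summable.congr h1 (hupd i t)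
  have hgupd : ∀ (i : Fin k) (t : ℝ),
      g (Function.update ξs i (ξs i + t)) = ∑' p, A p * Real.exp (t * (p i : ℝ)) := by
    intro i t
    rw [hg]
    exact tsum_congr (hupd i t)
  -- weighted summability
  have hbase : ∀ (y s : ℝ), 0 ≤ y → 0 < s → y * s ≤ Real.exp (s * y) := by
    intro y s hy hs
    have := Real.add_one_le_exp (s * y)
    nlinarith
  have hshift1 : ∀ (i : Fin k) (t : ℝ), |t| < ε →
      Summable (fun p => (p i : ℝ) * A p * Real.exp (t * (p i : ℝ))) := by
    intro i t ht
    have hsp : 0 < (ε - |t|) / 2 := by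
      have h := abs_nonneg t; linarith
    set s : ℝ := (ε - |t|) / 2 with hsdef
    have hts : |t + s| < ε := by
      have h1 := le_abs_self t
      have h2 := neg_abs_le t
      have h3 := abs_nonneg t
      rw [abs_lt]
      constructor
      · simp only [hsdef]; linarith
      · simp only [hsdef]; linarith
    refine Summable.of_nonneg_of_le ?_ ?_ ((hshift i (t + s) hts).mul_left s⁻¹)
    · intro p
      exact mul_nonneg (mul_nonneg (Nat.cast_nonneg _) (hA0 p)) (Real.exp_pos _).le
    · intro p
      have key : (p i : ℝ) ≤ s⁻¹ * Real.exp (s * (p i : ℝ)) := by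
        rw [inv_mul_eq_div, le_div_iff₀ hsp]
        exact hbase _ _ (Nat.cast_nonneg _) hsp
      have h0 : 0 ≤ A p * Real.exp (t * (p i : ℝ)) :=
        mul_nonneg (hA0 p) (Real.exp_pos _).le
      calc (p i : ℝ) * A p * Real.exp (t * (p i : ℝ))
          = (p i : ℝ) * (A p * Real.exp (t * (p i : ℝ))) := by ring
        _ ≤ (s⁻¹ * Real.exp (s * (p i : ℝ))) * (A p * Real.exp (t * (p i : ℝ))) :=
            mul_le_mul_of_nonneg_right key h0
        _ = s⁻¹ * (A p * Real.exp ((t + s) * (p i : ℝ))) := by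
            rw [add_mul, Real.exp_add]; ring
  have hshift2 : ∀ (i : Fin k) (t : ℝ), |t| < ε →
      Summable (fun p => (p i : ℝ) ^ 2 * A p * Real.exp (t * (p i : ℝ))) := by
    intro i t ht
    have hsp : 0 < (ε - |t|) / 4 := by
      have h := abs_nonneg t; linarith
    set s : ℝ := (ε - |t|) / 4 with hsdef
    have hts : |t + 2 * s| < ε := by
      have h1 := le_abs_self t
      have h2 := neg_abs_le t
      have h3 := abs_nonneg t
      rw [abs_lt]
      constructor
      · simp only [hsdef]; linarith
      · simp only [hsdef]; linarith
    refine Summable.of_nonneg_of_le ?_ ?_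
      ((hshift i (t + 2 * s) hts).mul_left ((s⁻¹) ^ 2))
    · intro p
      exact mul_nonneg (mul_nonneg (sq_nonneg _) (hA0 p)) (Real.exp_pos _).le
    · intro p
      have key0 : (p i : ℝ) * s ≤ Real.exp (s * (p i : ℝ)) :=
        hbase _ _ (Nat.cast_nonneg _) hsp
      have keysq : (p i : ℝ) ^ 2 * s ^ 2 ≤ Real.exp (2 * s * (p i : ℝ)) := by
        have hsq := pow_le_pow_left₀ (mul_nonneg (Nat.cast_nonneg (p i)) hsp.le) key0 2
        calc (p i : ℝ) ^ 2 * s ^ 2 = ((p i : ℝ) * s) ^ 2 := by ring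
          _ ≤ (Real.exp (s * (p i : ℝ))) ^ 2 := hsq
          _ = Real.exp (2 * s * (p i : ℝ)) := by rw [sq, ← Real.exp_add]; congr 1; ring
      have hs2 : 0 < s ^ 2 := by positivity
      have key : (p i : ℝ) ^ 2 ≤ (s⁻¹) ^ 2 * Real.exp (2 * s * (p i : ℝ)) := by
        have h' : (s⁻¹) ^ 2 * Real.exp (2 * s * (p i : ℝ))
            = Real.exp (2 * s * (p i : ℝ)) / s ^ 2 := by
          field_simp
        rw [h', le_div_iff₀ hs2]
        linarith [keysq]
      have h0 : 0 ≤ A p * Real.exp (t * (p i : ℝ)) :=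
        mul_nonneg (hA0 p) (Real.exp_pos _).le
      calc (p i : ℝ) ^ 2 * A p * Real.exp (t * (p i : ℝ))
          = (p i : ℝ) ^ 2 * (A p * Real.exp (t * (p i : ℝ))) := by ring
        _ ≤ ((s⁻¹) ^ 2 * Real.exp (2 * s * (p i : ℝ))) * (A p * Real.exp (t * (p i : ℝ))) :=
            mul_le_mul_of_nonneg_right key h0
        _ = (s⁻¹) ^ 2 * (A p * Real.exp ((t + 2 * s) * (p i : ℝ))) := by
            rw [add_mul, Real.exp_add]; ring
  have hSpA : ∀ j : Fin k, Summable (fun p => (p j : ℝ) * A p) := by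
    intro j
    exact (hshift1 j 0 (by simpa using hε)).congr fun p => by simp
  have hQsAll : ∀ j : Fin k, Summable (fun p => (p j : ℝ) ^ 2 * A p) := by
    intro j
    exact (hshift2 j 0 (by simpa using hε)).congr fun p => by simp
  constructor
  · -- tuning equations imply global minimality
    intro hstat η hη
    have hstat' : ∀ j : Fin k, ∑' p, (p j : ℝ) * A p = ν j * G := by
      intro j
      have h := hstat j
      rw [hGg] at h
      rw [← h]
      exact tsum_congr fun p => by simp only [hAdef]; ring
    set d : Fin k → ℝ := fun j => η j - ξs j with hddef
    set m : ℝ := ∑ j, ν j * d j with hmdef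
    have hη' : Summable (fun p => c p * Real.exp (∑ j, (p j : ℝ) * η j)) := by
      rw [hΩ] at hη; exact hη
    have hBA : ∀ p, c p * Real.exp (∑ j, (p j : ℝ) * η j)
        = A p * Real.exp (∑ j, (p j : ℝ) * d j) := by
      intro p
      have h : ∑ j, (p j : ℝ) * η j
          = (∑ j, (p j : ℝ) * ξs j) + ∑ j, (p j : ℝ) * d j := by
        rw [← Finset.sum_add_distrib]
        refine Finset.sum_congr rfl fun j _ => ?_
        simp only [hddef]; ring
      rw [h, Real.exp_add]
      simp only [hAdef]; ring
    have hBsum : Summable (fun p => A p * Real.exp (∑ j, (p j : ℝ) * d j)) :=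
      hη'.congr hBA
    have hL1 : Summable (fun p => ∑ j, (Real.exp m * d j) * ((p j : ℝ) * A p)) := by
      apply summable_sum
      intro j _
      exact (hSpA j).mul_left _
    have hLsum : Summable (fun p =>
        (Real.exp m * (1 - m)) * A p + ∑ j, (Real.exp m * d j) * ((p j : ℝ) * A p)) :=
      (hA.mul_left _).add hL1
    have hle : ∀ p, (Real.exp m * (1 - m)) * A p
        + ∑ j, (Real.exp m * d j) * ((p j : ℝ) * A p)
        ≤ A p * Real.exp (∑ j, (p j : ℝ) * d j) := by
      intro p
      set x : ℝ := ∑ j, (p j : ℝ) * d j with hxdef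
      have h1 : x - m + 1 ≤ Real.exp (x - m) := Real.add_one_le_exp _
      have h2 : Real.exp m * (x - m + 1) ≤ Real.exp x := by
        calc Real.exp m * (x - m + 1) ≤ Real.exp m * Real.exp (x - m) :=
              mul_le_mul_of_nonneg_left h1 (Real.exp_pos m).le
          _ = Real.exp x := by rw [← Real.exp_add]; congr 1; ring
      have hsum' : ∑ j, (Real.exp m * d j) * ((p j : ℝ) * A p)
          = (A p * Real.exp m) * x := by
        simp only [hxdef]
        rw [Finset.mul_sum]
        exact Finset.sum_congr rfl fun j _ => by ring
      rw [hsum']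
      nlinarith [mul_le_mul_of_nonneg_left h2 (hA0 p)]
    have hTL : ∑' p, ((Real.exp m * (1 - m)) * A p
          + ∑ j, (Real.exp m * d j) * ((p j : ℝ) * A p)) = Real.exp m * G := by
      rw [Summable.tsum_add (hA.mul_left _) hL1, tsum_mul_left,
        Summable.tsum_finsetSum (fun j _ => (hSpA j).mul_left _)]
      have h : ∀ j ∈ Finset.univ, ∑' p, (Real.exp m * d j) * ((p j : ℝ) * A p)
          = (Real.exp m * d j) * (ν j * G) := by
        intro j _
        rw [tsum_mul_left, hstat' j]
      rw [Finset.sum_congr rfl h]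
      have h2 : ∑ j, (Real.exp m * d j) * (ν j * G) = (Real.exp m * G) * m := by
        rw [hmdef, Finset.mul_sum]
        exact Finset.sum_congr rfl fun j _ => by ring
      rw [h2, ← hGdef]
      ring
    have hfin : Real.exp m * G ≤ g η := by
      rw [hg]
      calc Real.exp m * G
          = ∑' p, ((Real.exp m * (1 - m)) * A p
              + ∑ j, (Real.exp m * d j) * ((p j : ℝ) * A p)) := hTL.symm
        _ ≤ ∑' p, A p * Real.exp (∑ j, (p j : ℝ) * d j) :=
            Summable.tsum_le_tsum hle hLsum hBsum
        _ = ∑' p, c p * Real.exp (∑ j, (p j : ℝ) * η j) :=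
            tsum_congr fun p => (hBA p).symm
    have hlog : m + Real.log G ≤ Real.log (g η) := by
      calc m + Real.log G = Real.log (Real.exp m * G) := by
            rw [Real.log_mul (Real.exp_ne_zero m) (ne_of_gt hGpos), Real.log_exp]
        _ ≤ Real.log (g η) := Real.log_le_log (mul_pos (Real.exp_pos m) hGpos) hfin
    have hm2 : (∑ j, ν j * η j) - (∑ j, ν j * ξs j) = m := by
      rw [hmdef, ← Finset.sum_sub_distrib]
      exact Finset.sum_congr rfl fun j _ => by simp only [hddef]; ring
    rw [hGg]
    linarith [hlog, hm2]
  · -- global minimality implies tuning equations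
    intro hmin i
    have hgoal : (∑' p, (p i : ℝ) * c p * Real.exp (∑ j, (p j : ℝ) * ξs j))
        = ∑' p, (p i : ℝ) * A p :=
      tsum_congr fun p => by simp only [hAdef]; ring
    rw [hgoal, hGg]
    set S : ℝ := ∑' p, (p i : ℝ) * A p with hSdef
    set Q : ℝ := ∑' p, (p i : ℝ) ^ 2 * A p with hQdef
    set R : ℝ := ∑' p, (p i : ℝ) ^ 2 * A p * Real.exp (ε / 4 * (p i : ℝ)) with hRdef
    have hQsum : Summable (fun p => (p i : ℝ) ^ 2 * A p) := hQsAll i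
    have hRsum : Summable (fun p => (p i : ℝ) ^ 2 * A p * Real.exp (ε / 4 * (p i : ℝ))) :=
      hshift2 i (ε / 4) (by rw [abs_of_pos (by linarith)]; linarith)
    have hQ0 : 0 ≤ Q := tsum_nonneg fun p => mul_nonneg (sq_nonneg _) (hA0 p)
    have hR0 : 0 ≤ R := tsum_nonneg fun p =>
      mul_nonneg (mul_nonneg (sq_nonneg _) (hA0 p)) (Real.exp_pos _).le
    have hmin' : ∀ t : ℝ, |t| < ε →
        G * Real.exp (ν i * t) ≤ ∑' p, A p * Real.exp (t * (p i : ℝ)) := by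
      intro t ht
      have h1 := hmin _ (hmemupd i t ht)
      rw [hgupd i t, hupdν i t, hGg] at h1
      have hφpos : 0 < ∑' p, A p * Real.exp (t * (p i : ℝ)) :=
        Summable.tsum_pos (hshift i t ht) (fun p => mul_nonneg (hA0 p) (Real.exp_pos _).le) p₀
          (mul_pos hAp₀ (Real.exp_pos _))
      have h2 : Real.log G + ν i * t
          ≤ Real.log (∑' p, A p * Real.exp (t * (p i : ℝ))) := by linarith
      calc G * Real.exp (ν i * t) = Real.exp (Real.log G + ν i * t) := by
            rw [Real.exp_add, Real.exp_log hGpos]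
        _ ≤ Real.exp (Real.log (∑' p, A p * Real.exp (t * (p i : ℝ)))) :=
            Real.exp_le_exp.mpr h2
        _ = ∑' p, A p * Real.exp (t * (p i : ℝ)) := Real.exp_log hφpos
    have key1 : ∀ t : ℝ, 0 < t → t < ε → S ≤ ν i * G + t * Q := by
      intro t ht0 htε
      have habs : |(-t)| < ε := by rw [abs_neg, abs_of_pos ht0]; exact htε
      have hlow := hmin' (-t) habs
      have hsumR : Summable (fun p => A p - t * ((p i : ℝ) * A p)
          + t ^ 2 * ((p i : ℝ) ^ 2 * A p)) :=
        (hA.sub ((hSpA i).mul_left t)).add (hQsum.mul_left _)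
      have hpt : ∀ p, A p * Real.exp (-t * (p i : ℝ))
          ≤ A p - t * ((p i : ℝ) * A p) + t ^ 2 * ((p i : ℝ) ^ 2 * A p) := by
        intro p
        have hx : (0:ℝ) ≤ t * (p i : ℝ) := mul_nonneg ht0.le (Nat.cast_nonneg _)
        have h := exp_neg_le_aux (t * (p i : ℝ)) hx
        have h2 : Real.exp (-t * (p i : ℝ)) ≤ 1 - t * (p i : ℝ) + (t * (p i : ℝ)) ^ 2 := by
          rw [neg_mul]; exact h
        nlinarith [mul_le_mul_of_nonneg_left h2 (hA0 p)]
      have hup : ∑' p, A p * Real.exp (-t * (p i : ℝ)) ≤ G - t * S + t ^ 2 * Q := by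
        calc ∑' p, A p * Real.exp (-t * (p i : ℝ))
            ≤ ∑' p, (A p - t * ((p i : ℝ) * A p) + t ^ 2 * ((p i : ℝ) ^ 2 * A p)) :=
              Summable.tsum_le_tsum hpt (hshift i (-t) habs) hsumR
          _ = G - t * S + t ^ 2 * Q := by
              rw [Summable.tsum_add (hA.sub ((hSpA i).mul_left t)) (hQsum.mul_left _),
                Summable.tsum_sub hA ((hSpA i).mul_left t), tsum_mul_left, tsum_mul_left,
                ← hGdef, ← hSdef, ← hQdef]
      have h3 : 1 - t * ν i ≤ Real.exp (ν i * -t) := by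
        have := Real.add_one_le_exp (ν i * -t); nlinarith
      have h4 : G * (1 - t * ν i) ≤ G * Real.exp (ν i * -t) :=
        mul_le_mul_of_nonneg_left h3 hGpos.le
      have h5 : t * S ≤ t * (ν i * G + t * Q) := by nlinarith [hlow, hup, h4]
      exact le_of_mul_le_mul_left h5 ht0
    have key2 : ∀ t : ℝ, 0 < t → t ≤ ε / 4 → ν i * G ≤ S + t * R := by
      intro t ht0 htε
      have htε' : t < ε := by linarith
      have habs : |t| < ε := by rw [abs_of_pos ht0]; exact htε'
      have hlow := hmin' t habs
      have hsumR : Summable (fun p => A p + t * ((p i : ℝ) * A p)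
          + t ^ 2 * ((p i : ℝ) ^ 2 * A p * Real.exp (ε / 4 * (p i : ℝ)))) :=
        (hA.add ((hSpA i).mul_left t)).add (hRsum.mul_left _)
      have hpt : ∀ p, A p * Real.exp (t * (p i : ℝ))
          ≤ A p + t * ((p i : ℝ) * A p)
            + t ^ 2 * ((p i : ℝ) ^ 2 * A p * Real.exp (ε / 4 * (p i : ℝ))) := by
        intro p
        have hx : (0:ℝ) ≤ t * (p i : ℝ) := mul_nonneg ht0.le (Nat.cast_nonneg _)
        have h := exp_le_aux (t * (p i : ℝ)) hx
        have hmono : Real.exp (t * (p i : ℝ)) ≤ Real.exp (ε / 4 * (p i : ℝ)) :=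
          Real.exp_le_exp.mpr (mul_le_mul_of_nonneg_right htε (Nat.cast_nonneg _))
        have h1 : A p * Real.exp (t * (p i : ℝ))
            ≤ A p * (1 + t * (p i : ℝ) + (t * (p i : ℝ)) ^ 2 * Real.exp (t * (p i : ℝ))) :=
          mul_le_mul_of_nonneg_left h (hA0 p)
        have h2 : A p * ((t * (p i : ℝ)) ^ 2 * Real.exp (t * (p i : ℝ)))
            ≤ A p * ((t * (p i : ℝ)) ^ 2 * Real.exp (ε / 4 * (p i : ℝ))) :=
          mul_le_mul_of_nonneg_left (mul_le_mul_of_nonneg_left hmono (sq_nonneg _)) (hA0 p)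
        nlinarith [h1, h2]
      have hup : ∑' p, A p * Real.exp (t * (p i : ℝ)) ≤ G + t * S + t ^ 2 * R := by
        calc ∑' p, A p * Real.exp (t * (p i : ℝ))
            ≤ ∑' p, (A p + t * ((p i : ℝ) * A p)
              + t ^ 2 * ((p i : ℝ) ^ 2 * A p * Real.exp (ε / 4 * (p i : ℝ)))) :=
              Summable.tsum_le_tsum hpt (hshift i t habs) hsumR
          _ = G + t * S + t ^ 2 * R := by
              rw [Summable.tsum_add (hA.add ((hSpA i).mul_left t)) (hRsum.mul_left _),
                Summable.tsum_add hA ((hSpA i).mul_left t), tsum_mul_left, tsum_mul_left,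
                ← hGdef, ← hSdef, ← hRdef]
      have h3 : 1 + t * ν i ≤ Real.exp (ν i * t) := by
        have := Real.add_one_le_exp (ν i * t); nlinarith
      have h4 : G * (1 + t * ν i) ≤ G * Real.exp (ν i * t) :=
        mul_le_mul_of_nonneg_left h3 hGpos.le
      have h5 : t * (ν i * G) ≤ t * (S + t * R) := by nlinarith [hlow, hup, h4]
      exact le_of_mul_le_mul_left h5 ht0
    refine le_antisymm ?_ ?_
    · apply le_of_forall_pos_le_add
      intro δ hδ
      have hQ1 : (0:ℝ) < Q + 1 := by linarith
      have ht0 : 0 < min (ε / 2) (δ / (Q + 1)) := lt_min (by linarith) (div_pos hδ hQ1)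
      have htε : min (ε / 2) (δ / (Q + 1)) < ε :=
        lt_of_le_of_lt (min_le_left _ _) (by linarith)
      have hk1 := key1 _ ht0 htε
      have h6 : min (ε / 2) (δ / (Q + 1)) ≤ δ / (Q + 1) := min_le_right _ _
      have h7 : min (ε / 2) (δ / (Q + 1)) * Q ≤ δ / (Q + 1) * Q :=
        mul_le_mul_of_nonneg_right h6 hQ0
      have h8 : δ / (Q + 1) * (Q + 1) = δ := div_mul_cancel₀ _ (ne_of_gt hQ1)
      have h9 : δ / (Q + 1) * Q ≤ δ := by nlinarith [div_nonneg hδ.le hQ1.le]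
      linarith
    · apply le_of_forall_pos_le_add
      intro δ hδ
      have hR1 : (0:ℝ) < R + 1 := by linarith
      have ht0 : 0 < min (ε / 8) (δ / (R + 1)) := lt_min (by linarith) (div_pos hδ hR1)
      have htε : min (ε / 8) (δ / (R + 1)) ≤ ε / 4 :=
        le_trans (min_le_left _ _) (by linarith)
      have hk2 := key2 _ ht0 htε
      have h6 : min (ε / 8) (δ / (R + 1)) ≤ δ / (R + 1) := min_le_right _ _
      have h7 : min (ε / 8) (δ / (R + 1)) * R ≤ δ / (R + 1) * R :=
        mul_le_mul_of_nonneg_right h6 hR0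
      have h8 : δ / (R + 1) * (R + 1) = δ := div_mul_cancel₀ _ (ne_of_gt hR1)
      have h9 : δ / (R + 1) * R ≤ δ := by nlinarith [div_nonneg hδ.le hR1.le]
      linarith
end

section
/- Assume that for every j : Fin m there is a finite chain of indices 0 = i_0, i_1, …, i_r = j in Fin m such that for each s < r, ψ_{i_s} depends strictly on coordinate i_{s+1} (strong connectivity of the dependency graph from the first coordinate). Let ν : Fin k → ℝ. If (c*, ξ*) ∈ S minimizes the objective (c, ξ) ↦ c 0 − ∑ i, ν i * ξ i over the feasible set S, then all constraints are tight at (c*, ξ*): ψ i c* ξ* = c* i for every i : Fin m. (At an optimum of the convex tuning program for an algebraic system, all inequalities log Φ(e^c, e^ξ) ≤ c hold with equality.) -/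
/-- At an optimum of the convex tuning program for an algebraic system whose
dependency graph is strongly connected from the first coordinate, all
inequality constraints `log Φ_i(e^c, e^ξ) ≤ c_i` are tight. -/
theorem tight_constraints_at_min
    (m k : ℕ) (hm : 0 < m) (hk : 0 < k)
    (ψ : Fin m → (Fin m → ℝ) → (Fin k → ℝ) → ℝ)
    (hcont : ∀ i, Continuous fun p : (Fin m → ℝ) × (Fin k → ℝ) => ψ i p.1 p.2)
    (hmono : ∀ i ξ, Monotone fun c => ψ i c ξ)
    (hconn : ∀ j : Fin m, ∃ (r : ℕ) (chain : ℕ → Fin m),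
      chain 0 = (⟨0, hm⟩ : Fin m) ∧ chain r = j ∧
      ∀ s < r, ∀ (c : Fin m → ℝ) (ξ : Fin k → ℝ),
        StrictMono fun t : ℝ => ψ (chain s) (Function.update c (chain (s + 1)) t) ξ)
    (S : Set ((Fin m → ℝ) × (Fin k → ℝ)))
    (hS : S = {p | ∀ i, ψ i p.1 p.2 ≤ p.1 i})
    (ν : Fin k → ℝ)
    (cs : Fin m → ℝ) (ξs : Fin k → ℝ)
    (hfeas : (cs, ξs) ∈ S)
    (hopt : ∀ p ∈ S, cs ⟨0, hm⟩ - ∑ i, ν i * ξs i ≤ p.1 ⟨0, hm⟩ - ∑ i, ν i * p.2 i) :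
    ∀ i : Fin m, ψ i cs ξs = cs i := by
  subst hS
  simp only [Set.mem_setOf_eq] at hfeas
  have helper : ∀ (i : Fin m) (c : Fin m → ℝ),
      (∀ i', ψ i' c ξs ≤ c i') → c ≤ cs → ψ i c ξs < cs i →
      ∃ c', (∀ i', ψ i' c' ξs ≤ c' i') ∧ c' ≤ cs ∧ c' i < cs i := by
    intro i c hfc hle hslack
    set t := min (c i) (max (ψ i c ξs) (cs i - 1)) with ht
    have hupd : Function.update c i t ≤ c := by
      intro i'
      by_cases h : i' = i
      · subst h
        rw [Function.update_self]
        exact min_le_left _ _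
      · simp [Function.update_of_ne h]
    refine ⟨Function.update c i t, ?_, ?_, ?_⟩
    · intro i'
      by_cases h : i' = i
      · subst h
        calc ψ i' (Function.update c i' t) ξs ≤ ψ i' c ξs := hmono i' ξs hupd
          _ ≤ t := le_min (hfc i') (le_max_left _ _)
          _ = Function.update c i' t i' := by simp
      · calc ψ i' (Function.update c i t) ξs ≤ ψ i' c ξs := hmono i' ξs hupd
          _ ≤ c i' := hfc i'
          _ = Function.update c i t i' := by simp [Function.update_of_ne h]
    · exact hupd.trans hle
    · have : t < cs i :=
        lt_of_le_of_lt (min_le_right _ _) (max_lt hslack (by linarith))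
      simpa using this
  intro j
  refine le_antisymm (hfeas j) ?_
  by_contra hlt
  push_neg at hlt
  obtain ⟨r, chain, h0, hr, hstep⟩ := hconn j
  have key : ∀ d s, s + d = r →
      ∃ c, (∀ i', ψ i' c ξs ≤ c i') ∧ c ≤ cs ∧ c (chain s) < cs (chain s) := by
    intro d
    induction d with
    | zero =>
      intro s hs
      have hsr : s = r := by omega
      subst hsr
      exact helper (chain s) cs hfeas le_rfl (by rw [hr]; exact hlt)
    | succ d ih =>
      intro s hs
      obtain ⟨c, hfc, hle, hc⟩ := ih (s + 1) (by omega)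
      have hslt : s < r := by omega
      have hst := hstep s hslt cs ξs
      have h1 : ψ (chain s) c ξs < cs (chain s) := by
        have h2 : c ≤ Function.update cs (chain (s + 1)) (c (chain (s + 1))) := by
          intro i'
          by_cases h : i' = chain (s + 1)
          · subst h; simp
          · simp only [Function.update_of_ne h]; exact hle i'
        calc ψ (chain s) c ξs
            ≤ ψ (chain s) (Function.update cs (chain (s + 1)) (c (chain (s + 1)))) ξs :=
              hmono _ ξs h2
          _ < ψ (chain s) (Function.update cs (chain (s + 1)) (cs (chain (s + 1)))) ξs :=
              hst hc
          _ = ψ (chain s) cs ξs := by rw [Function.update_eq_self]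
          _ ≤ cs (chain s) := hfeas (chain s)
      exact helper (chain s) c hfc hle h1
  obtain ⟨c, hfc, hle, hc0⟩ := key r 0 (by omega)
  rw [h0] at hc0
  have hmem : (c, ξs) ∈ {p : (Fin m → ℝ) × (Fin k → ℝ) | ∀ i, ψ i p.1 p.2 ≤ p.1 i} := hfc
  have := hopt (c, ξs) hmem
  simp only at this
  linarith
end

section
/- Assume the dependency graph is strongly connected: for all i, j : Fin m there is a finite chain i = i_0, i_1, …, i_r = j such that for each s < r, ψ_{i_s} depends strictly on coordinate i_{s+1}. Let α : Fin k → ℝ. If (c*, ξ*, η*) ∈ S maximizes the objective (c, ξ, η) ↦ ξ + ∑ i, α i * η i over the feasible set S, then all constraints are tight at (c*, ξ*, η*): ψ i c* ξ* η* = c* i for every i : Fin m. (At an optimum of the convex program tuning a singular Boltzmann sampler, all inequalities log Φ(e^c, e^ξ, e^η) ≤ c hold with equality.) -/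
private lemma slack_step {m k : ℕ}
    (ψ : Fin m → (Fin m → ℝ) → ℝ → (Fin k → ℝ) → ℝ)
    (hmono : ∀ i ξ η, Monotone fun c => ψ i c ξ η)
    (ξ : ℝ) (η : Fin k → ℝ)
    (c : Fin m → ℝ) (T : Set (Fin m))
    (hfeas : ∀ l, ψ l c ξ η ≤ c l)
    (hT : ∀ l ∈ T, ψ l c ξ η < c l)
    (i : Fin m) (hi : i ∈ T) (j : Fin m)
    (hdep : ∀ (c : Fin m → ℝ) (ξ : ℝ) (η : Fin k → ℝ),
      StrictMono fun t : ℝ => ψ j (Function.update c i t) ξ η) :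
    ∃ c' : Fin m → ℝ, (∀ l, ψ l c' ξ η ≤ c' l) ∧
      ∀ l ∈ insert j T, ψ l c' ξ η < c' l := by
  have hslack := hT i hi
  set δ := (c i - ψ i c ξ η) / 2 with hδ
  have hψi : ψ i c ξ η = c i - 2 * δ := by rw [hδ]; ring
  have hδpos : 0 < δ := by rw [hδ]; linarith
  set c' := Function.update c i (c i - δ) with hc'
  have hle : c' ≤ c := by
    intro l
    rcases eq_or_ne l i with rfl | h
    · simp only [hc', Function.update_self]; linarith
    · simp [hc', Function.update_of_ne h]
  have hψle : ∀ l, ψ l c' ξ η ≤ ψ l c ξ η := fun l => hmono l ξ η hle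
  have hci : c' i = c i - δ := by simp [hc']
  have hcl : ∀ l, l ≠ i → c' l = c l := fun l h => by
    simp [hc', Function.update_of_ne h]
  have hstricti : ψ i c' ξ η < c' i := by
    have := hψle i
    rw [hci]; linarith
  have hstrictj : ψ j c' ξ η < ψ j c ξ η := by
    have h1 := hdep c ξ η (show c i - δ < c i by linarith)
    simpa [Function.update_eq_self] using h1
  refine ⟨c', ?_, ?_⟩
  · intro l
    rcases eq_or_ne l i with rfl | h
    · exact hstricti.le
    · rw [hcl l h]; exact (hψle l).trans (hfeas l)
  · intro l hl
    rcases eq_or_ne l i with rfl | h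
    · exact hstricti
    · rw [hcl l h]
      rcases Set.mem_insert_iff.mp hl with rfl | hlT
      · exact hstrictj.trans_le (hfeas l)
      · exact (hψle l).trans_lt (hT l hlT)

private lemma slack_chain {m k : ℕ}
    (ψ : Fin m → (Fin m → ℝ) → ℝ → (Fin k → ℝ) → ℝ)
    (hmono : ∀ i ξ η, Monotone fun c => ψ i c ξ η)
    (hconn : ∀ i j : Fin m, ∃ (r : ℕ) (chain : ℕ → Fin m),
      chain 0 = i ∧ chain r = j ∧
      ∀ s < r, ∀ (c : Fin m → ℝ) (ξ : ℝ) (η : Fin k → ℝ),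
        StrictMono fun t : ℝ => ψ (chain s) (Function.update c (chain (s + 1)) t) ξ η)
    (ξ : ℝ) (η : Fin k → ℝ)
    (T : Set (Fin m)) (i₀ : Fin m) (hi₀ : i₀ ∈ T) (j : Fin m)
    (c : Fin m → ℝ)
    (hfeas : ∀ l, ψ l c ξ η ≤ c l)
    (hT : ∀ l ∈ T, ψ l c ξ η < c l) :
    ∃ c' : Fin m → ℝ, (∀ l, ψ l c' ξ η ≤ c' l) ∧
      ∀ l ∈ insert j T, ψ l c' ξ η < c' l := by
  obtain ⟨r, chain, hch0, hchr, hdep⟩ := hconn j i₀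
  have key : ∀ t, t ≤ r → ∃ c' : Fin m → ℝ, (∀ l, ψ l c' ξ η ≤ c' l) ∧
      ∀ l ∈ insert (chain (r - t)) T, ψ l c' ξ η < c' l := by
    intro t
    induction t with
    | zero =>
      intro _
      refine ⟨c, hfeas, ?_⟩
      intro l hl
      rcases Set.mem_insert_iff.mp hl with rfl | hlT
      · have : chain (r - 0) = i₀ := by simpa using hchr
        exact hT _ (this ▸ hi₀)
      · exact hT l hlT
    | succ t ih =>
      intro ht
      obtain ⟨c₁, hfeas₁, hT₁⟩ := ih (Nat.le_of_succ_le ht)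
      set s := r - (t + 1) with hs
      have hs1 : s + 1 = r - t := by omega
      have hsr : s < r := by omega
      obtain ⟨c₂, hfeas₂, hT₂⟩ := slack_step ψ hmono ξ η c₁ (insert (chain (r - t)) T)
        hfeas₁ hT₁ (chain (s + 1)) (by rw [hs1]; exact Set.mem_insert _ _)
        (chain s) (hdep s hsr)
      refine ⟨c₂, hfeas₂, fun l hl => hT₂ l ?_⟩
      rcases Set.mem_insert_iff.mp hl with rfl | hlT
      · exact Set.mem_insert _ _
      · exact Set.mem_insert_of_mem _ (Set.mem_insert_of_mem _ hlT)
  have := key r le_rfl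
  simpa [Nat.sub_self, hch0] using this

/-- At an optimum of the convex program tuning a singular Boltzmann sampler
of a strongly connected system, all inequality constraints
`log Φ_i(e^c, e^ξ, e^η) ≤ c_i` are tight. -/
theorem tight_constraints_at_singular_max
    (m k : ℕ) (hm : 0 < m) (hk : 0 < k)
    (ψ : Fin m → (Fin m → ℝ) → ℝ → (Fin k → ℝ) → ℝ)
    (hcont : ∀ i,
      Continuous fun p : (Fin m → ℝ) × ℝ × (Fin k → ℝ) => ψ i p.1 p.2.1 p.2.2)
    (hmono : ∀ i ξ η, Monotone fun c => ψ i c ξ η)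
    (hstrictξ : ∀ i c η, StrictMono fun ξ : ℝ => ψ i c ξ η)
    (hconn : ∀ i j : Fin m, ∃ (r : ℕ) (chain : ℕ → Fin m),
      chain 0 = i ∧ chain r = j ∧
      ∀ s < r, ∀ (c : Fin m → ℝ) (ξ : ℝ) (η : Fin k → ℝ),
        StrictMono fun t : ℝ => ψ (chain s) (Function.update c (chain (s + 1)) t) ξ η)
    (S : Set ((Fin m → ℝ) × ℝ × (Fin k → ℝ)))
    (hS : S = {p | ∀ i, ψ i p.1 p.2.1 p.2.2 ≤ p.1 i})
    (α : Fin k → ℝ)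
    (cs : Fin m → ℝ) (ξs : ℝ) (ηs : Fin k → ℝ)
    (hfeas : (cs, ξs, ηs) ∈ S)
    (hopt : ∀ p ∈ S, p.2.1 + ∑ i, α i * p.2.2 i ≤ ξs + ∑ i, α i * ηs i) :
    ∀ i : Fin m, ψ i cs ξs ηs = cs i := by
  have hfeas0 : ∀ l, ψ l cs ξs ηs ≤ cs l := by rw [hS] at hfeas; exact hfeas
  intro i
  by_contra hne
  have hlt : ψ i cs ξs ηs < cs i := lt_of_le_of_ne (hfeas0 i) hne
  -- make all constraints slack
  have all : ∀ F : Finset (Fin m), ∃ c' : Fin m → ℝ,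
      (∀ l, ψ l c' ξs ηs ≤ c' l) ∧
      ∀ l ∈ insert i (↑F : Set (Fin m)), ψ l c' ξs ηs < c' l := by
    intro F
    induction F using Finset.induction_on with
    | empty =>
      refine ⟨cs, hfeas0, ?_⟩
      intro l hl
      rcases Set.mem_insert_iff.mp hl with rfl | hlT
      · exact hlt
      · simp at hlT
    | @insert j F hj ih =>
      obtain ⟨c₁, hfeas₁, hT₁⟩ := ih
      obtain ⟨c₂, hfeas₂, hT₂⟩ := slack_chain ψ hmono hconn ξs ηs
        (insert i (↑F : Set (Fin m))) i (Set.mem_insert _ _) j c₁ hfeas₁ hT₁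
      refine ⟨c₂, hfeas₂, fun l hl => hT₂ l ?_⟩
      simp only [Finset.coe_insert, Set.mem_insert_iff] at hl ⊢
      tauto
  obtain ⟨c', hfeas', hT'⟩ := all Finset.univ
  have hslack : ∀ l, ψ l c' ξs ηs < c' l := fun l => hT' l (by simp)
  have hcont' : ∀ l, Continuous fun t : ℝ => ψ l c' t ηs := fun l =>
    (hcont l).comp (continuous_const.prodMk (continuous_id.prodMk continuous_const))
  have hopen : IsOpen {t : ℝ | ∀ l, ψ l c' t ηs < c' l} := by
    have heq : {t : ℝ | ∀ l, ψ l c' t ηs < c' l}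
        = ⋂ l, {t : ℝ | ψ l c' t ηs < c' l} := by ext t; simp
    rw [heq]
    exact isOpen_iInter_of_finite fun l => isOpen_lt (hcont' l) continuous_const
  obtain ⟨ε, hε, hball⟩ := Metric.isOpen_iff.mp hopen ξs hslack
  have hmem2 : ξs + ε / 2 ∈ {t : ℝ | ∀ l, ψ l c' t ηs < c' l} := by
    apply hball
    have : dist (ξs + ε / 2) ξs = ε / 2 := by
      rw [Real.dist_eq, show ξs + ε / 2 - ξs = ε / 2 by ring]
      exact abs_of_pos (by linarith)
    rw [Metric.mem_ball, this]; linarith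
  have hfeas2 : ((c', (ξs + ε / 2, ηs)) : (Fin m → ℝ) × ℝ × (Fin k → ℝ)) ∈ S := by
    rw [hS]; intro l; exact (hmem2 l).le
  have h2 : ξs + ε / 2 + ∑ l, α l * ηs l ≤ ξs + ∑ l, α l * ηs l :=
    hopt _ hfeas2
  linarith
end

section
/- If (z_n) is a sequence in (0, ρ) such that z_n * F′(z_n) / F(z_n) = n for every n ≥ 1, then n * (1 − z_n/ρ) → α as n → ∞. (Consequently the tuning parameter for target expected size n satisfies z*(n) ∼ ρ(1 − α/n) for rational specifications.) -/
/-!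
The expected size is `E(z) = z β'(z)/β(z) + α z/(ρ − z)`. With `t_n = 1 − z_n/ρ` and
`L_n = z_n β'(z_n)/β(z_n)`, the equation `E(z_n) = n` reads `n t_n = L_n t_n + α (1 − t_n)`,
where `L_n` is bounded because `z β'(z)/β(z)` is continuous on the compact `[0, ρ]`.
Hence `t_n = α / (n − L_n + α) → 0`, and `n t_n − α = (L_n − α) t_n → 0`.
-/

open Filter Topology

lemma logDeriv_one_sub_div_rpow {ρ x : ℝ} (α : ℝ) (hρ : 0 < ρ) (hx : x < ρ) :
    logDeriv (fun y => (1 - y / ρ) ^ (-α)) x = α / (ρ - x) := by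
  set t := 1 - x / ρ with ht_def
  have ht : 0 < t := by rw [sub_pos, div_lt_one hρ]; exact hx
  have hderiv : HasDerivAt (fun y => (1 - y / ρ) ^ (-α)) (-α * t ^ (-α - 1) * -(1 / ρ)) x := by
    have hbase : HasDerivAt (fun y : ℝ => 1 - y / ρ) (-(1 / ρ)) x := by
      simpa using ((hasDerivAt_id x).div_const ρ).const_sub 1
    exact (Real.hasDerivAt_rpow_const (Or.inl ht.ne')).comp x hbase
  have hρx : ρ - x = ρ * t := by rw [ht_def]; field_simp
  rw [logDeriv_apply, hderiv.deriv, Real.rpow_sub_one ht.ne', hρx]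
  change _ / t ^ (-α) = _
  clear_value t
  have := (Real.rpow_pos_of_pos ht (-α)).ne'
  field_simp

lemma logDeriv_mul_one_sub_div_rpow {β : ℝ → ℝ} {ρ x : ℝ} (α : ℝ) (hρ : 0 < ρ) (hx : x < ρ)
    (hβ : DifferentiableAt ℝ β x) (hβx : β x ≠ 0) :
    logDeriv (fun y => β y * (1 - y / ρ) ^ (-α)) x = logDeriv β x + α / (ρ - x) := by
  have ht : 0 < 1 - x / ρ := by rw [sub_pos, div_lt_one hρ]; exact hx
  rw [logDeriv_mul (g := fun y => (1 - y / ρ) ^ (-α)) x hβx (Real.rpow_pos_of_pos ht _).ne' hβ,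
    logDeriv_one_sub_div_rpow α hρ hx]
  exact ((differentiableAt_id.div_const ρ).const_sub 1).rpow_const (Or.inl ht.ne')

lemma tendsto_natCast_mul_of_mul_eq {L t : ℕ → ℝ} {α : ℝ}
    (hL : IsBoundedUnder (· ≤ ·) atTop (fun n => |L n|))
    (h : ∀ᶠ n : ℕ in atTop, (n : ℝ) * t n = L n * t n + α * (1 - t n)) :
    Tendsto (fun n : ℕ => (n : ℝ) * t n) atTop (𝓝 α) := by
  obtain ⟨M, hM⟩ := hL
  rw [eventually_map] at hM
  have hden : Tendsto (fun n : ℕ => (n : ℝ) - L n + α) atTop atTop := by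
    refine tendsto_atTop_add_const_right _ α ?_
    refine tendsto_atTop_add_right_of_le' _ (-M) tendsto_natCast_atTop_atTop ?_
    filter_upwards [hM] with n hn
    linarith [(abs_le.1 hn).2]
  have ht : Tendsto t atTop (𝓝 0) := by
    refine ((tendsto_const_nhds (x := α)).div_atTop hden).congr' ?_
    filter_upwards [h, hden.eventually_gt_atTop 0] with n hn hpos
    rw [div_eq_iff hpos.ne']
    linarith
  have hLα : IsBoundedUnder (· ≤ ·) atTop (norm ∘ fun n => L n - α) := by
    refine ⟨M + |α|, eventually_map.2 ?_⟩
    filter_upwards [hM] with n hn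
    exact (abs_sub _ _).trans (by simpa using hn)
  rw [← tendsto_sub_nhds_zero_iff]
  refine (isBoundedUnder_le_mul_tendsto_zero hLα ht).congr' ?_
  filter_upwards [h] with n hn
  linarith

lemma ContDiffOn.continuousOn_logDeriv {β : ℝ → ℝ} {U : Set ℝ} (hβ : ContDiffOn ℝ 1 β U)
    (hU : IsOpen U) (hβU : ∀ x ∈ U, β x ≠ 0) : ContinuousOn (logDeriv β) U :=
  (hβ.continuousOn_deriv_of_isOpen hU le_rfl).div hβ.continuousOn hβU

theorem rational_tuning_asymptotics_general
    (ρ α : ℝ) (hρ : 0 < ρ)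
    (β : ℝ → ℝ) (U : Set ℝ) (hU : IsOpen U) (hUρ : Set.Icc 0 ρ ⊆ U)
    (hβ : ContDiffOn ℝ 1 β U) (hβpos : ∀ z ∈ U, 0 < β z)
    (F : ℝ → ℝ) (hF : ∀ z, F z = β z * (1 - z / ρ) ^ (-α))
    (z : ℕ → ℝ)
    (hzmem : ∀ n : ℕ, 1 ≤ n → z n ∈ Set.Ioo 0 ρ)
    (htune : ∀ n : ℕ, 1 ≤ n → z n * deriv F (z n) / F (z n) = n) :
    Filter.Tendsto (fun n : ℕ => (n : ℝ) * (1 - z n / ρ))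
      Filter.atTop (nhds α) := by
  have hβU : ∀ x ∈ U, β x ≠ 0 := fun x hx => (hβpos x hx).ne'
  obtain ⟨M, hM⟩ := isCompact_Icc.exists_bound_of_continuousOn
    ((continuousOn_id.mul (hβ.continuousOn_logDeriv hU hβU)).mono hUρ)
  refine tendsto_natCast_mul_of_mul_eq (L := fun n => z n * logDeriv β (z n))
    ⟨M, eventually_map.2 ?_⟩ ?_
  · filter_upwards [eventually_ge_atTop 1] with n hn
    exact hM _ (Set.Ioo_subset_Icc_self (hzmem n hn))
  · filter_upwards [eventually_ge_atTop 1] with n hn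
    obtain ⟨hz0, hzρ⟩ := hzmem n hn
    have hzU : z n ∈ U := hUρ ⟨hz0.le, hzρ.le⟩
    have hE : z n * (logDeriv β (z n) + α / (ρ - z n)) = n := by
      rw [← logDeriv_mul_one_sub_div_rpow α hρ hzρ
        ((hβ.differentiableOn one_ne_zero).differentiableAt (hU.mem_nhds hzU)) (hβU _ hzU),
        ← funext hF, logDeriv_apply, ← mul_div_assoc, htune n hn]
    rw [← hE]
    have hρz : ρ - z n ≠ 0 := (sub_pos.2 hzρ).ne'
    field_simp
    ring

/-- For a rational specification with singular form `F(z) = β(z)(1 − z/ρ)^{−α}`,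
the tuning parameter `z_n` achieving expected size `n` satisfies
`n (1 − z_n/ρ) → α`, i.e. `z*(n) ∼ ρ(1 − α/n)`. -/
theorem rational_tuning_asymptotics
    (ρ α : ℝ) (hρ : 0 < ρ) (hα : 0 < α)
    (β : ℝ → ℝ) (U : Set ℝ) (hU : IsOpen U) (hUρ : Set.Icc 0 ρ ⊆ U)
    (hβ : ContDiffOn ℝ 1 β U) (hβpos : ∀ z ∈ U, 0 < β z)
    (F : ℝ → ℝ) (hF : ∀ z, F z = β z * (1 - z / ρ) ^ (-α))
    (z : ℕ → ℝ)
    (hzmem : ∀ n : ℕ, 1 ≤ n → z n ∈ Set.Ioo 0 ρ)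
    (htune : ∀ n : ℕ, 1 ≤ n → z n * deriv F (z n) / F (z n) = n) :
    Filter.Tendsto (fun n : ℕ => (n : ℝ) * (1 - z n / ρ))
      Filter.atTop (nhds α) :=
  rational_tuning_asymptotics_general ρ α hρ β U hU hUρ hβ hβpos F hF z hzmem htune
end

section
/- Let B ≥ 0 and let (m_n) be a sequence of reals with |m_n − n| ≤ B for all n. If (z_n) and (z′_n) are sequences in (0, ρ) with z_n F′(z_n)/F(z_n) = n and z′_n F′(z′_n)/F(z′_n) = m_n for all n ≥ 1, then there is a constant K such that |z_n − z′_n| ≤ K / n² for all n ≥ 1. (The tuning precision needed to control the expected size up to O(1) is ε = O(n^{−2}) for rational specifications.) -/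
/-!
With `g(z) = z β'(z) / β(z)` the expected size is `E(z) = g(z) + α z / (ρ - z)`, and `g` is bounded
on the compact interval `[0, ρ]`. Hence `E(z) (ρ - z) = O(1)`, so a parameter tuned to expected size
`≍ n` lies within `O(1/n)` of the singularity. Rewriting `E(z) = g(z) - α + α ρ / (ρ - z)`, two
parameters whose expected sizes differ by `O(1)` satisfy
`(z - z') α ρ = ((E(z) - g(z)) - (E(z') - g(z'))) (ρ - z) (ρ - z')`, which is `O(1) · O(1/n²)`.
-/

open Set

theorem expectedSize_eq {ρ α : ℝ} {β F : ℝ → ℝ} (hρ : 0 < ρ)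
    (hF : ∀ z, F z = β z * (1 - z / ρ) ^ (-α)) {z : ℝ} (hz : z < ρ)
    (hβ : DifferentiableAt ℝ β z) (hβz : β z ≠ 0) :
    z * deriv F z / F z = z * deriv β z / β z + α * z / (ρ - z) := by
  have hw : 0 < 1 - z / ρ := by rwa [sub_pos, div_lt_one hρ]
  have hpow : HasDerivAt (fun x => (1 - x / ρ) ^ (-α))
      (α / ρ * (1 - z / ρ) ^ (-α - 1)) z := by
    have hlin : HasDerivAt (fun x => 1 - x / ρ) (-(1 / ρ)) z := by
      simpa using ((hasDerivAt_id z).div_const ρ).const_sub 1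
    convert hlin.rpow_const (p := -α) (Or.inl hw.ne') using 1
    ring
  have hderiv : deriv F z
      = deriv β z * (1 - z / ρ) ^ (-α) + β z * (α / ρ * (1 - z / ρ) ^ (-α - 1)) := by
    rw [show F = fun x => β x * (1 - x / ρ) ^ (-α) from funext hF]
    exact (hβ.hasDerivAt.mul hpow).deriv
  have hρz : ρ - z ≠ 0 := sub_ne_zero.2 hz.ne'
  have hw_eq : 1 - z / ρ = (ρ - z) / ρ := by field_simp
  have hP : 0 < ((ρ - z) / ρ) ^ (-α) := hw_eq ▸ Real.rpow_pos_of_pos hw _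
  rw [hderiv, hF, Real.rpow_sub_one hw.ne', hw_eq]
  field_simp

theorem exists_bound_mul_deriv_div {β : ℝ → ℝ} {U K : Set ℝ} (hU : IsOpen U) (hK : IsCompact K)
    (hKU : K ⊆ U) (hβ : ContDiffOn ℝ 1 β U) (hβne : ∀ z ∈ K, β z ≠ 0) :
    ∃ M, ∀ z ∈ K, |z * deriv β z / β z| ≤ M := by
  have hβ' : ContinuousOn (deriv β) U := hβ.continuousOn_deriv_of_isOpen hU le_rfl
  have hcont : ContinuousOn (fun z => z * deriv β z / β z) K :=
    (continuousOn_id.mul (hβ'.mono hKU)).div (hβ.continuousOn.mono hKU) hβne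
  simpa only [Real.norm_eq_abs] using hK.exists_bound_of_continuousOn hcont

section DistanceToSingularity

variable {ρ α a b g g' t t' M : ℝ}

theorem mul_sub_le_of_eq_add_div (ha : a ∈ Ioo 0 ρ) (hα : 0 ≤ α) (hg : g ≤ M) (hM : 0 ≤ M)
    (ht : t = g + α * a / (ρ - a)) : t * (ρ - a) ≤ (M + α) * ρ := by
  have hρa : 0 < ρ - a := sub_pos.2 ha.2
  have hexp : t * (ρ - a) = g * (ρ - a) + α * a := by
    rw [ht]; field_simp
  rw [hexp]
  nlinarith [mul_le_mul_of_nonneg_right hg hρa.le, mul_le_mul_of_nonneg_left ha.2.le hα,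
    mul_nonneg hM ha.1.le]

theorem sub_mul_eq_of_eq_add_div (ha : a < ρ) (hb : b < ρ) (ht : t = g + α * a / (ρ - a))
    (ht' : t' = g' + α * b / (ρ - b)) :
    (a - b) * (α * ρ) = (t - g - (t' - g')) * ((ρ - a) * (ρ - b)) := by
  have hρa : ρ - a ≠ 0 := sub_ne_zero.2 ha.ne'
  have hρb : ρ - b ≠ 0 := sub_ne_zero.2 hb.ne'
  subst ht ht'
  field_simp
  ring

theorem abs_sub_mul_sq_le {B : ℝ} (hρ : 0 < ρ) (hα : 0 < α) (ha : a ∈ Ioo 0 ρ)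
    (hb : b ∈ Ioo 0 ρ) (hg : |g| ≤ M) (hg' : |g'| ≤ M) (ht0 : 0 ≤ t) (htt' : |t' - t| ≤ B)
    (ht : t = g + α * a / (ρ - a)) (ht' : t' = g' + α * b / (ρ - b)) :
    |a - b| * t ^ 2 * (α * ρ) ≤ (B + 2 * M) * ((M + α) * ρ) * ((M + α + B) * ρ) := by
  have hM : 0 ≤ M := (abs_nonneg g).trans hg
  have hB : 0 ≤ B := (abs_nonneg _).trans htt'
  have hρa : 0 < ρ - a := sub_pos.2 ha.2
  have hρb : 0 < ρ - b := sub_pos.2 hb.2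
  have hnear_a : t * (ρ - a) ≤ (M + α) * ρ :=
    mul_sub_le_of_eq_add_div ha hα.le (abs_le.1 hg).2 hM ht
  have hnear_b : t * (ρ - b) ≤ (M + α + B) * ρ := by
    have h := mul_sub_le_of_eq_add_div hb hα.le (abs_le.1 hg').2 hM ht'
    nlinarith [(abs_le.1 htt').1, mul_le_mul_of_nonneg_left hb.1.le hB]
  have hdiff : |t - g - (t' - g')| ≤ B + 2 * M := by
    rw [abs_le] at hg hg' htt' ⊢
    constructor <;> linarith
  calc |a - b| * t ^ 2 * (α * ρ)
      = |t - g - (t' - g')| * ((t * (ρ - a)) * (t * (ρ - b))) := by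
        rw [mul_right_comm, ← abs_of_pos (mul_pos hα hρ), ← abs_mul,
          sub_mul_eq_of_eq_add_div ha.2 hb.2 ht ht', abs_mul, abs_of_pos (mul_pos hρa hρb)]
        ring
    _ ≤ (B + 2 * M) * ((M + α) * ρ) * ((M + α + B) * ρ) := by
        rw [mul_assoc (B + 2 * M)]
        exact mul_le_mul hdiff
          (mul_le_mul hnear_a hnear_b (mul_nonneg ht0 hρb.le) (by positivity))
          (by positivity) (by positivity)

end DistanceToSingularity

theorem rational_tuning_precision_general
    (ρ α : ℝ) (hρ : 0 < ρ) (hα : 0 < α)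
    (β : ℝ → ℝ) (U : Set ℝ) (hU : IsOpen U) (hUρ : Set.Icc 0 ρ ⊆ U)
    (hβ : ContDiffOn ℝ 1 β U) (hβpos : ∀ z ∈ U, 0 < β z)
    (F : ℝ → ℝ) (hF : ∀ z, F z = β z * (1 - z / ρ) ^ (-α))
    (B : ℝ) (m : ℕ → ℝ) (hm : ∀ n : ℕ, |m n - n| ≤ B)
    (z z' : ℕ → ℝ)
    (hzmem : ∀ n : ℕ, 1 ≤ n → z n ∈ Set.Ioo 0 ρ)
    (hz'mem : ∀ n : ℕ, 1 ≤ n → z' n ∈ Set.Ioo 0 ρ)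
    (htune : ∀ n : ℕ, 1 ≤ n → z n * deriv F (z n) / F (z n) = n)
    (htune' : ∀ n : ℕ, 1 ≤ n → z' n * deriv F (z' n) / F (z' n) = m n) :
    ∃ K : ℝ, ∀ n : ℕ, 1 ≤ n → |z n - z' n| ≤ K / (n : ℝ) ^ 2 := by
  obtain ⟨M, hM⟩ := exists_bound_mul_deriv_div hU isCompact_Icc hUρ hβ
    fun w hw => (hβpos w (hUρ hw)).ne'
  have hE : ∀ w ∈ Ioo 0 ρ, w * deriv F w / F w = w * deriv β w / β w + α * w / (ρ - w) := by
    intro w hw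
    have hwU : w ∈ U := hUρ (Ioo_subset_Icc_self hw)
    exact expectedSize_eq hρ hF hw.2
      ((hβ.differentiableOn one_ne_zero).differentiableAt (hU.mem_nhds hwU)) (hβpos w hwU).ne'
  refine ⟨(B + 2 * M) * ((M + α) * ρ) * ((M + α + B) * ρ) / (α * ρ), fun n hn => ?_⟩
  have hn_pos : (0 : ℝ) < n := by exact_mod_cast hn
  rw [div_div, le_div_iff₀ (by positivity), mul_comm (α * ρ), ← mul_assoc]
  exact abs_sub_mul_sq_le hρ hα (hzmem n hn) (hz'mem n hn)
    (hM _ (Ioo_subset_Icc_self (hzmem n hn))) (hM _ (Ioo_subset_Icc_self (hz'mem n hn)))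
    n.cast_nonneg (hm n) ((htune n hn).symm.trans (hE _ (hzmem n hn)))
    ((htune' n hn).symm.trans (hE _ (hz'mem n hn)))

/-- For a rational specification with singular form `F(z) = β(z)(1 − z/ρ)^{−α}`,
the tuning precision needed to keep the expected size within `O(1)` of the
target `n` is `ε = O(n^{−2})`. -/
theorem rational_tuning_precision
    (ρ α : ℝ) (hρ : 0 < ρ) (hα : 0 < α)
    (β : ℝ → ℝ) (U : Set ℝ) (hU : IsOpen U) (hUρ : Set.Icc 0 ρ ⊆ U)
    (hβ : ContDiffOn ℝ 1 β U) (hβpos : ∀ z ∈ U, 0 < β z)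
    (F : ℝ → ℝ) (hF : ∀ z, F z = β z * (1 - z / ρ) ^ (-α))
    (B : ℝ) (hB : 0 ≤ B) (m : ℕ → ℝ) (hm : ∀ n : ℕ, |m n - n| ≤ B)
    (z z' : ℕ → ℝ)
    (hzmem : ∀ n : ℕ, 1 ≤ n → z n ∈ Set.Ioo 0 ρ)
    (hz'mem : ∀ n : ℕ, 1 ≤ n → z' n ∈ Set.Ioo 0 ρ)
    (htune : ∀ n : ℕ, 1 ≤ n → z n * deriv F (z n) / F (z n) = n)
    (htune' : ∀ n : ℕ, 1 ≤ n → z' n * deriv F (z' n) / F (z' n) = m n) :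
    ∃ K : ℝ, ∀ n : ℕ, 1 ≤ n → |z n - z' n| ≤ K / (n : ℝ) ^ 2 :=
  rational_tuning_precision_general ρ α hρ hα β U hU hUρ hβ hβpos F hF B m hm z z' hzmem hz'mem
    htune htune'
end

section
/- For all integers k, j with 1 ≤ k ≤ j ≤ d, q k j = ∑ over subsets A of the integer interval [j − k + 1, d] with card A = k of ∏_{i ∈ A} s i. In particular, q k k equals the k-th elementary symmetric polynomial e_k(s_1, …, s_d) of the numbers s_1, …, s_d. -/
open Finset

lemma sum_powersetCard_insert_split (f : ℕ → ℝ) (a : ℕ) (t : Finset ℕ) (ha : a ∉ t) (k : ℕ) :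
    ∑ A ∈ Finset.powersetCard (k + 1) (insert a t), ∏ i ∈ A, f i
      = f a * (∑ A ∈ Finset.powersetCard k t, ∏ i ∈ A, f i)
        + ∑ A ∈ Finset.powersetCard (k + 1) t, ∏ i ∈ A, f i := by
  rw [Finset.powersetCard_succ_insert ha, Finset.sum_union, Finset.sum_image, Finset.mul_sum,
    add_comm]
  · congr 1
    refine Finset.sum_congr rfl fun A hA => ?_
    have hsub : A ⊆ t := (Finset.mem_powersetCard.mp hA).1
    rw [Finset.prod_insert (fun h => ha (hsub h))]
  · intro A hA B hB hAB
    have hA' : a ∉ A := fun h => ha ((Finset.mem_powersetCard.mp hA).1 h)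
    have hB' : a ∉ B := fun h => ha ((Finset.mem_powersetCard.mp hB).1 h)
    have := congrArg (Finset.erase · a) hAB
    simpa [Finset.erase_insert hA', Finset.erase_insert hB'] using this
  · rw [Finset.disjoint_left]
    intro A hA hA'
    have : a ∉ A := fun h => ha ((Finset.mem_powersetCard.mp hA).1 h)
    obtain ⟨B, _, rfl⟩ := Finset.mem_image.mp hA'
    exact this (Finset.mem_insert_self a B)

/-- The dynamic-programming arrays `p, q` used to compute the branching
probabilities of the multiset operator satisfy: `q k j` is the sum, over all
`k`-element subsets `A` of `{j − k + 1, …, d}`, of `∏_{i ∈ A} s i`; in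
particular `q k k` is the `k`-th elementary symmetric polynomial of
`s 1, …, s d`. -/
theorem dp_arrays_eq_symmetric_sums
    (d : ℕ) (hd : 1 ≤ d) (s : ℕ → ℝ) (p q : ℕ → ℕ → ℝ)
    (hp1 : ∀ j, 1 ≤ j → j ≤ d → p 1 j = s j)
    (hqd : ∀ k, 1 ≤ k → k ≤ d → q k d = p k d)
    (hq : ∀ k j, 1 ≤ k → k ≤ d → k ≤ j → j ≤ d - 1 → q k j = p k j + q k (j + 1))
    (hp : ∀ k j, 2 ≤ k → k ≤ d → k ≤ j → j ≤ d → p k j = s (j - k + 1) * q (k - 1) j) :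
    ∀ k j, 1 ≤ k → k ≤ j → j ≤ d →
      (q k j = ∑ A ∈ Finset.powersetCard k (Finset.Icc (j - k + 1) d),
          ∏ i ∈ A, s i)
      ∧ q k k = Multiset.esymm ((Finset.Icc 1 d).val.map s) k := by
  have key : ∀ k j, 1 ≤ k → k ≤ j → j ≤ d →
      q k j = ∑ A ∈ Finset.powersetCard k (Finset.Icc (j - k + 1) d), ∏ i ∈ A, s i := by
    intro k
    induction k with
    | zero => intro j h; omega
    | succ k ih =>
      -- value of p (k+1) j
      have hpval : ∀ j, k + 1 ≤ j → j ≤ d →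
          p (k + 1) j = s (j - k) *
            ∑ A ∈ Finset.powersetCard k (Finset.Icc (j - k + 1) d), ∏ i ∈ A, s i := by
        intro j hj1 hj2
        rcases Nat.eq_zero_or_pos k with hk | hk
        · subst hk
          rw [hp1 j (by omega) hj2]
          simp
        · rw [hp (k + 1) j (by omega) (by omega) hj1 hj2]
          have h1 : j - (k + 1) + 1 = j - k := by omega
          have h2 : k + 1 - 1 = k := by omega
          rw [h1, h2, ih j hk (by omega) hj2]
      have inner : ∀ n j, k + 1 ≤ j → j ≤ d → d - j = n →
          q (k + 1) j = ∑ A ∈ Finset.powersetCard (k + 1) (Finset.Icc (j - (k + 1) + 1) d),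
            ∏ i ∈ A, s i := by
        intro n
        induction n with
        | zero =>
          intro j hj1 hj2 hn
          have hjd : j = d := by omega
          subst hjd
          have hins : Finset.Icc (j - (k + 1) + 1) j = insert (j - k) (Finset.Icc (j - k + 1) j) := by
            ext x
            simp only [Finset.mem_Icc, Finset.mem_insert]
            omega
          have hnotmem : j - k ∉ Finset.Icc (j - k + 1) j := by
            simp only [Finset.mem_Icc]; omega
          rw [hins, sum_powersetCard_insert_split s _ _ hnotmem,
            hqd (k + 1) (by omega) hj1, hpval j hj1 hj2]
          have hcard : (Finset.Icc (j - k + 1) j).card = k := by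
            rw [Nat.card_Icc]; omega
          have hempty : Finset.powersetCard (k + 1) (Finset.Icc (j - k + 1) j) = ∅ := by
            rw [Finset.powersetCard_eq_empty, hcard]
            omega
          rw [hempty]
          simp
        | succ n ihn =>
          intro j hj1 hj2 hn
          have hjd : j ≤ d - 1 := by omega
          rw [hq (k + 1) j (by omega) (by omega) hj1 hjd, hpval j hj1 hj2,
            ihn (j + 1) (by omega) (by omega) (by omega)]
          have h1 : j + 1 - (k + 1) + 1 = j - k + 1 := by omega
          rw [h1]
          have hins : Finset.Icc (j - (k + 1) + 1) d = insert (j - k) (Finset.Icc (j - k + 1) d) := by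
            ext x
            simp only [Finset.mem_Icc, Finset.mem_insert]
            omega
          have hnotmem : j - k ∉ Finset.Icc (j - k + 1) d := by
            simp only [Finset.mem_Icc]; omega
          rw [hins, sum_powersetCard_insert_split s _ _ hnotmem]
      intro j _ hj1 hj2
      exact inner (d - j) j hj1 hj2 rfl
  intro k j hk hkj hjd
  refine ⟨key k j hk hkj hjd, ?_⟩
  have h := key k k hk le_rfl (le_trans hkj hjd)
  have h1 : k - k + 1 = 1 := by omega
  rw [h1] at h
  rw [h, Finset.esymm_map_val]
end

section
/- The family l : List α ↦ (l.map w).prod is summable and ∑' (l : List α), (l.map w).prod = (1 − A)⁻¹. Consequently, assigning to each list l the probability (1 − A) * (l.map w).prod defines a probability distribution on List α; moreover, when A > 0 this equals A^(l.length) * (1 − A) * ∏_{x ∈ l} (w x / A), i.e. the probability that the sequence sampler — which draws a geometric length ℓ with P(ℓ) = A^ℓ(1 − A) and then ℓ independent components each with probability w x / A — outputs l. Hence the Boltzmann sampler for Seq(𝒜) assigns each sequence its Boltzmann probability. -/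
/-!
Identify a list with its length `n` and its tuple of entries `Fin n → α`. In `ℝ≥0∞`, where
every family is summable and sums may be rearranged freely, the weight of the tuples of length
`n` is `(∑' x, w x) ^ n = A ^ n`, so the total weight is the geometric series
`∑ A ^ n = (1 - A)⁻¹`. Since `A < 1` this is finite, which gives summability back in `ℝ`.
The sampler formula is the identity `∏ (w x / A) = (∏ w x) / A ^ ℓ`.
-/

open scoped ENNReal

theorem ENNReal.tsum_pi_fin_prod {α : Type*} (g : α → ℝ≥0∞) (n : ℕ) :
    ∑' f : Fin n → α, ∏ i, g (f i) = (∑' a, g a) ^ n := by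
  induction n with
  | zero => simp
  | succ n ih =>
    calc ∑' f : Fin (n + 1) → α, ∏ i, g (f i)
        = ∑' p : α × (Fin n → α), g p.1 * ∏ i, g (p.2 i) := by
          rw [← (Fin.consEquiv fun _ => α).tsum_eq]
          simp [Fin.prod_univ_succ]
      _ = (∑' a, g a) ^ (n + 1) := by
          rw [ENNReal.tsum_prod', pow_succ', ← ih, ← ENNReal.tsum_mul_right]
          simp_rw [ENNReal.tsum_mul_left]

theorem ENNReal.tsum_list_prod_map {α : Type*} (g : α → ℝ≥0∞) :
    ∑' l : List α, (l.map g).prod = (1 - ∑' a, g a)⁻¹ := by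
  calc ∑' l : List α, (l.map g).prod
      = ∑' p : Σ n, Fin n → α, ∏ i, g (p.2 i) := by
        rw [← List.equivSigmaTuple.symm.tsum_eq]
        simp [List.map_ofFn, List.prod_ofFn]
    _ = ∑' n : ℕ, (∑' a, g a) ^ n := by
        simp_rw [ENNReal.tsum_sigma', ENNReal.tsum_pi_fin_prod]
    _ = (1 - ∑' a, g a)⁻¹ := ENNReal.tsum_geometric _

theorem hasSum_list_prod_map {α : Type*} {w : α → ℝ} (hw : ∀ x, 0 ≤ w x) (hsum : Summable w)
    (hlt : ∑' x, w x < 1) :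
    HasSum (fun l : List α => (l.map w).prod) (1 - ∑' x, w x)⁻¹ := by
  set g : α → ℝ≥0∞ := fun x => ENNReal.ofReal (w x)
  have htotal : ∑' l : List α, (l.map g).prod = (ENNReal.ofReal (1 - ∑' x, w x))⁻¹ := by
    rw [ENNReal.tsum_list_prod_map, ← ENNReal.ofReal_tsum_of_nonneg hw hsum,
      ENNReal.ofReal_sub _ (tsum_nonneg hw), ENNReal.ofReal_one]
  have hfinite : ∑' l : List α, (l.map g).prod ≠ ∞ := by
    rw [htotal]
    exact ENNReal.inv_ne_top.mpr (ENNReal.ofReal_pos.mpr (sub_pos.mpr hlt)).ne'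
  have htoReal (l : List α) : ((l.map g).prod).toReal = (l.map w).prod := by
    change ENNReal.toRealHom _ = _
    rw [map_list_prod, List.map_map]
    exact congrArg List.prod (List.map_congr_left fun x _ => ENNReal.toReal_ofReal (hw x))
  have hreal := (ENNReal.summable_toReal hfinite).hasSum
  rwa [← ENNReal.tsum_toReal_eq (ENNReal.ne_top_of_tsum_ne_top hfinite), htotal,
    ENNReal.toReal_inv, ENNReal.toReal_ofReal (sub_pos.mpr hlt).le, funext htoReal] at hreal

theorem List.prod_map_div_const {ι M : Type*} [DivisionCommMonoid M] (l : List ι) (f : ι → M)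
    (a : M) : (l.map fun i => f i / a).prod = (l.map f).prod / a ^ l.length := by
  induction l with
  | nil => simp
  | cons i l ih =>
    rw [map_cons, prod_cons, ih, div_mul_div_comm, map_cons, prod_cons, length_cons, pow_succ']

theorem seq_boltzmann_sampler_general
    (α : Type*)
    (w : α → ℝ) (hw : ∀ x, 0 ≤ w x) (hsum : Summable w)
    (A : ℝ) (hA : A = ∑' x, w x) (hA1 : A < 1) :
    Summable (fun l : List α => (l.map w).prod)
    ∧ (∑' l : List α, (l.map w).prod) = (1 - A)⁻¹
    ∧ (∀ l : List α, 0 ≤ (1 - A) * (l.map w).prod)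
    ∧ (∑' l : List α, (1 - A) * (l.map w).prod) = 1
    ∧ (0 < A → ∀ l : List α,
        (1 - A) * (l.map w).prod
          = A ^ l.length * (1 - A) * (l.map fun x => w x / A).prod) := by
  subst hA
  have hseq := hasSum_list_prod_map hw hsum hA1
  have hpos : 0 < 1 - ∑' x, w x := sub_pos.mpr hA1
  refine ⟨hseq.summable, hseq.tsum_eq, fun l => ?_, ?_, fun hA0 l => ?_⟩
  · exact mul_nonneg hpos.le (List.prod_nonneg (by simpa using fun x _ => hw x))
  · rw [tsum_mul_left, hseq.tsum_eq, mul_inv_cancel₀ hpos.ne']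
  · rw [List.prod_map_div_const, mul_right_comm, mul_div_cancel₀ _ (pow_ne_zero _ hA0.ne'),
      mul_comm]

/-- The Boltzmann sampler for `Seq(𝒜)`: the total Boltzmann weight of all
finite sequences is `(1 − A)⁻¹`, the normalised weights form a probability
distribution on `List α`, and (for `A > 0`) this distribution coincides with
drawing a geometric length `ℓ` with `P(ℓ) = A^ℓ (1 − A)` and then `ℓ`
independent components with probabilities `w x / A`. -/
theorem seq_boltzmann_sampler
    (α : Type*) [Countable α]
    (w : α → ℝ) (hw : ∀ x, 0 ≤ w x) (hsum : Summable w)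
    (A : ℝ) (hA : A = ∑' x, w x) (hA1 : A < 1) :
    Summable (fun l : List α => (l.map w).prod)
    ∧ (∑' l : List α, (l.map w).prod) = (1 - A)⁻¹
    ∧ (∀ l : List α, 0 ≤ (1 - A) * (l.map w).prod)
    ∧ (∑' l : List α, (1 - A) * (l.map w).prod) = 1
    ∧ (0 < A → ∀ l : List α,
        (1 - A) * (l.map w).prod
          = A ^ l.length * (1 - A) * (l.map fun x => w x / A).prod) :=
  seq_boltzmann_sampler_general α w hw hsum A hA hA1
end

section
/- For every path i_0, i_1, …, i_r in Fin m, the product of its Boltzmann transition probabilities telescopes: ∏_{t<r} P(i_t → i_{t+1}) = (∏_{l} (z l) ^ (∑_{t<r} δ i_t i_{t+1} l)) * S i_r / S i_0. Consequently, any two paths with the same initial state, the same final state and the same total composition-size vector ∑_{t<r} δ i_t i_{t+1} have equal probability; that is, structures produced by the interruptible sampler for a strongly connected rational specification are uniformly distributed conditioned on their composition size. -/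
/-- The product of Boltzmann transition probabilities along a path of the
interruptible sampler telescopes: it equals `z^{total size} · S(end)/S(start)`.
Consequently any two paths with the same endpoints and the same total
composition-size vector are equiprobable, i.e. the interruptible sampler for a
strongly connected rational specification is uniform conditioned on the
composition size. -/
theorem interruptible_sampler_uniform
    (m k : ℕ) (hm : 1 ≤ m) (hk : 1 ≤ k)
    (S : Fin m → ℝ) (hS : ∀ i, 0 < S i)
    (z : Fin k → ℝ) (hz : ∀ l, 0 < z l)
    (δ : Fin m → Fin m → Fin k → ℕ)
    (P : Fin m → Fin m → ℝ)
    (hP : ∀ i j, P i j = (∏ l, z l ^ δ i j l) * S j / S i) :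
    (∀ (r : ℕ) (i : ℕ → Fin m),
      ∏ t ∈ Finset.range r, P (i t) (i (t + 1))
        = (∏ l, z l ^ (∑ t ∈ Finset.range r, δ (i t) (i (t + 1)) l))
            * S (i r) / S (i 0))
    ∧ (∀ (r r' : ℕ) (i i' : ℕ → Fin m),
        i 0 = i' 0 → i r = i' r' →
        (∀ l, (∑ t ∈ Finset.range r, δ (i t) (i (t + 1)) l)
            = ∑ t ∈ Finset.range r', δ (i' t) (i' (t + 1)) l) →
        ∏ t ∈ Finset.range r, P (i t) (i (t + 1))
          = ∏ t ∈ Finset.range r', P (i' t) (i' (t + 1))) := by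
  have main : ∀ (r : ℕ) (i : ℕ → Fin m),
      ∏ t ∈ Finset.range r, P (i t) (i (t + 1))
        = (∏ l, z l ^ (∑ t ∈ Finset.range r, δ (i t) (i (t + 1)) l))
            * S (i r) / S (i 0) := by
    intro r i
    induction r with
    | zero => simp [(hS (i 0)).ne']
    | succ n ih =>
        rw [Finset.prod_range_succ, ih, hP]
        have hz' : ∀ l, (0:ℝ) < z l := hz
        have : (∏ l, z l ^ (∑ t ∈ Finset.range (n+1), δ (i t) (i (t + 1)) l))
            = (∏ l, z l ^ (∑ t ∈ Finset.range n, δ (i t) (i (t + 1)) l))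
              * (∏ l, z l ^ δ (i n) (i (n+1)) l) := by
          rw [← Finset.prod_mul_distrib]
          refine Finset.prod_congr rfl fun l _ => ?_
          rw [Finset.sum_range_succ, pow_add]
        rw [this]
        field_simp [(hS (i 0)).ne', (hS (i n)).ne']
  refine ⟨main, fun r r' i i' h0 hr hδ => ?_⟩
  rw [main r i, main r' i', h0, hr]
  congr 2
  exact Finset.prod_congr rfl fun l _ => by rw [hδ l]
end
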